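/- arXiv:1405.2244 — 3 statements merged into one kernel-verified Lean document; each statement's English description precedes it below -/
import Mathlib

section
/- Let (X,d) be an ultra-metric space of diameter ≤ 1. Then d̂ extends the metric d on X ∪ {e}: for every x ∈ X, d̂(x,e) = 1, and for all x,y ∈ X, d̂(x,y) = d(x,y). -/
/-! Graev ultra-metrics on free groups (after Gao, Savchenko–Zarichnyi and
Shlossberg, "On Graev type ultra-metrics"). -/

namespace GraevStmt

variable {X : Type*}

/-- The alphabet `X̄ = X ∪ X⁻¹ ∪ {e}`: `none` is the letter `e`,
`some (x, true)` is the letter `x` and `some (x, false)` is the letter `x⁻¹`. -/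
abbrev Letter (X : Type*) := Option (X × Bool)

/-- The letter `e`. -/
def eL : Letter X := none

/-- The letter `x`, for `x ∈ X`. -/
def pos (x : X) : Letter X := some (x, true)

/-- The letter `x⁻¹`, for `x ∈ X`. -/
def neg (x : X) : Letter X := some (x, false)

/-- The formal inverse of a letter; `e⁻¹ = e` and `(x⁻¹)⁻¹ = x`. -/
def linv : Letter X → Letter X
  | none => none
  | some (x, b) => some (x, !b)

/-- Interpretation of a letter as an element of the free group `F(X)`. -/
def toF : Letter X → FreeGroup X
  | none => 1
  | some (x, b) => FreeGroup.mk [(x, b)]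

/-- The reduced word of a word `w ∈ W(X)` over the alphabet `X̄`, viewed as the
corresponding element of the free group `F(X)`. -/
def red (w : List (Letter X)) : FreeGroup X := (w.map toF).prod

/-- The canonical irreducible word over the alphabet `X̄` representing a given
element of the free group `F(X)`. -/
def wordOf [DecidableEq X] (w : FreeGroup X) : List (Letter X) :=
  w.toWord.map some

/-- `ρ_u(w, v)`: the maximum of the distances between corresponding letters of
two words of equal length. -/
def rho (d : Letter X → Letter X → ℝ) (w v : List (Letter X)) : ℝ :=
  (List.zipWith d w v).foldr max 0

/-- The Graev ultra-metric `δ_u` on `F(X)` associated with `d`: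
`δ_u(w, v) = inf {ρ_u(w*, v*) : lh(w*) = lh(v*), (w*)' = w, (v*)' = v}`. -/
noncomputable def graev (d : Letter X → Letter X → ℝ) (w v : FreeGroup X) : ℝ :=
  sInf {r : ℝ | ∃ w' v' : List (Letter X), w'.length = v'.length ∧
    red w' = w ∧ red v' = v ∧ r = rho d w' v'}

/-- `d` is an ultra-metric: symmetric, vanishing exactly on the diagonal and
satisfying the strong triangle inequality. -/
def IsUltraMetric {A : Type*} (d : A → A → ℝ) : Prop :=
  (∀ a b, d a b = d b a) ∧ (∀ a b, d a b = 0 ↔ a = b) ∧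
    ∀ a b c, d a c ≤ max (d a b) (d b c)

/-- An admissible ultra-metric on the alphabet `X̄`, i.e. an ultra-metric with
`d(x⁻¹, y⁻¹) = d(x, y)`, `d(x, e) = d(x⁻¹, e)` and `d(x⁻¹, y) = d(x, y⁻¹)`. -/
def IsAdmissible (d : Letter X → Letter X → ℝ) : Prop :=
  IsUltraMetric d ∧ (∀ x y : X, d (neg x) (neg y) = d (pos x) (pos y)) ∧
    (∀ x : X, d (pos x) eL = d (neg x) eL) ∧
    ∀ x y : X, d (neg x) (pos y) = d (pos x) (neg y)

/-- A function `R` on `F(X) × F(X)` is (two-sided) invariant if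
`R(uwv, uw'v) = R(w, w')` for all `u, v, w, w'`. -/
def IsInvariant (R : FreeGroup X → FreeGroup X → ℝ) : Prop :=
  ∀ u v w w' : FreeGroup X, R (u * w * v) (u * w' * v) = R w w'

/-- A match on `{0, …, n-1}`: an involution `θ` such that there are no
`i < j < θ(i) < θ(j)`. -/
def IsMatch {n : ℕ} (θ : Fin n → Fin n) : Prop :=
  (∀ i, θ (θ i) = i) ∧ ∀ i j : Fin n, ¬(i < j ∧ j < θ i ∧ θ i < θ j)

/-- The word `w^θ` associated with a word `w` and a match `θ`:
its `i`-th letter is `x_i` if `θ(i) > i`, `e` if `θ(i) = i`, and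
`x_{θ(i)}⁻¹` if `θ(i) < i`. -/
def matchWord (w : List (Letter X)) (θ : Fin w.length → Fin w.length) :
    List (Letter X) :=
  List.ofFn fun i => if i < θ i then w.get i
    else if θ i = i then eL else linv (w.get (θ i))

/-- `j₂(x, y) = x⁻¹y`. -/
def j2 (p : X × X) : FreeGroup X := (FreeGroup.of p.1)⁻¹ * FreeGroup.of p.2

/-- `j₂*(x, y) = xy⁻¹`. -/
def j2s (p : X × X) : FreeGroup X := FreeGroup.of p.1 * (FreeGroup.of p.2)⁻¹

/-- `ε̃ = ⋃_{w ∈ F(X)} w (j₂(ε) ∪ j₂*(ε)) w⁻¹` for `ε ⊆ X × X`. -/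
def tilde (S : Set (X × X)) : Set (FreeGroup X) :=
  ⋃ w : FreeGroup X, (fun g => w * g * w⁻¹) '' (j2 '' S ∪ j2s '' S)

/-- The extension of an ultra-metric `d` on `X` to the alphabet `X̄` determined
by a base point `x₀`: `d(x, e) = max {d(x, x₀), 1}`, `d(x⁻¹, y⁻¹) = d(x, y)`
and `d(x⁻¹, y) = d(x, y⁻¹) = max {d(x, e), d(y, e)}` for `x, y ∈ X ∪ {e}`. -/
def ext (d : X → X → ℝ) (x₀ : X) : Letter X → Letter X → ℝ
  | none, none => 0
  | some (x, _), none => max (d x x₀) 1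
  | none, some (y, _) => max (d y x₀) 1
  | some (x, true), some (y, true) => d x y
  | some (x, false), some (y, false) => d x y
  | some (x, _), some (y, _) => max (max (d x x₀) 1) (max (d y x₀) 1)

/-- The extension of an ultra-metric `d` of diameter at most `1` on `X` to the
alphabet `X̄`, with `d(x⁻¹, y⁻¹) = d(x, y)` and
`d(x⁻¹, y) = d(x, y⁻¹) = d(x, e) = d(x⁻¹, e) = 1`. -/
def extOne (d : X → X → ℝ) : Letter X → Letter X → ℝ
  | none, none => 0
  | some (x, true), some (y, true) => d x y
  | some (x, false), some (y, false) => d x y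
  | _, _ => 1

/-- The homomorphism `α : F(X) → ℤ` extending the constant map `X → {1} ⊆ ℤ`. -/
def alpha (w : FreeGroup X) : ℤ :=
  Multiplicative.toAdd ((FreeGroup.lift fun _ : X => Multiplicative.ofAdd (1 : ℤ)) w)

/-- `F(q_r) : F(X) → F(X/F_r)`, where `X/F_r` is the quotient of `X` by the
partition into open balls of radius `r` (for an ultra-metric the relation
`d x y < r` is an equivalence relation, so `Quot` of this relation is exactly
this quotient) and `q_r` is the quotient map. -/
def Fq (d : X → X → ℝ) (r : ℝ) :
    FreeGroup X →* FreeGroup (Quot fun x y : X => d x y < r) :=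
  FreeGroup.map (Quot.mk _)

/-- The Savchenko–Zarichnyi function `d̂` on `F(X) × F(X)`:
`d̂(v, w) = 1` if `α(v) ≠ α(w)`, and
`d̂(v, w) = inf {r > 0 : F(q_r)(v) = F(q_r)(w)}` if `α(v) = α(w)`. -/
noncomputable def dHat (d : X → X → ℝ) (v w : FreeGroup X) : ℝ :=
  if alpha v = alpha w then sInf {r : ℝ | 0 < r ∧ Fq d r v = Fq d r w} else 1

/-- `d̂` extends the metric `d` on `X ∪ {e}`: `d̂(x, e) = 1` for every
`x ∈ X`, and `d̂(x, y) = d(x, y)` for all `x, y ∈ X`. -/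
theorem dHat_extends {X : Type*} [Nonempty X]
    (d : X → X → ℝ) (hd : IsUltraMetric d) (hdiam : ∀ x y : X, d x y ≤ 1) :
    (∀ x : X, dHat d (FreeGroup.of x) 1 = 1) ∧
      ∀ x y : X, dHat d (FreeGroup.of x) (FreeGroup.of y) = d x y := by

  have hnonneg : ∀ x y : X, 0 ≤ d x y := by
    intro x y
    have h0 : d x x = 0 := (hd.2.1 x x).2 rfl
    have := hd.2.2 x y x
    rw [h0, hd.1 y x] at this
    simpa using this
  have halpha : ∀ x : X, alpha (FreeGroup.of x) = 1 := by
    intro x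
    simp [alpha, FreeGroup.lift_apply_of]
  constructor
  · intro x
    have h1 : alpha (1 : FreeGroup X) = 0 := by simp [alpha]
    rw [dHat, if_neg]
    rw [halpha, h1]; norm_num
  · intro x y
    have key : ∀ r : ℝ, 0 < r →
        ((Fq d r (FreeGroup.of x) = Fq d r (FreeGroup.of y)) ↔ d x y < r) := by
      intro r hr
      rw [Fq, FreeGroup.map.of, FreeGroup.map.of]
      constructor
      · intro h
        have h2 := FreeGroup.of_injective h
        have hev := Quot.eq.1 h2
        clear h h2
        induction hev with
        | rel a b hab => exact hab
        | refl a =>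
            have h0 : d a a = 0 := (hd.2.1 a a).2 rfl
            rw [h0]; exact hr
        | symm a b _ ih => rw [hd.1]; exact ih
        | trans a b c _ _ ih1 ih2 =>
            exact lt_of_le_of_lt (hd.2.2 a b c) (max_lt ih1 ih2)
      · intro h
        exact congrArg FreeGroup.of (Quot.sound h)
    rw [dHat, if_pos (by rw [halpha, halpha])]
    have hset : {r : ℝ | 0 < r ∧ Fq d r (FreeGroup.of x) = Fq d r (FreeGroup.of y)}
        = Set.Ioi (d x y) ∩ Set.Ioi 0 := by
      ext r
      simp only [Set.mem_setOf_eq, Set.mem_inter_iff, Set.mem_Ioi]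
      constructor
      · rintro ⟨hr, h⟩; exact ⟨(key r hr).1 h, hr⟩
      · rintro ⟨h, hr⟩; exact ⟨hr, (key r hr).2 h⟩
    rw [hset]
    rcases eq_or_lt_of_le (hnonneg x y) with h0 | h0
    · rw [← h0]
      simp [Set.Ioi_inter_Ioi, csInf_Ioi]
    · rw [Set.Ioi_inter_Ioi, max_eq_left h0.le, csInf_Ioi]


end GraevStmt
end

section
/- Let (X,d) be an ultra-metric space of diameter ≤ 1, extend d to X̄ = X ∪ X⁻¹ ∪ {e} by d(x⁻¹,y⁻¹) = d(x,y) and d(x⁻¹,y) = d(x,y⁻¹) = d(x,e) = d(x⁻¹,e) = 1 for all x,y ∈ X, and let δ_u be the associated Graev ultra-metric on F(X). Then δ_u(v,w) ≥ d̂(v,w) for all v,w ∈ F(X). -/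
/-! Graev ultra-metrics on free groups (after Gao, Savchenko–Zarichnyi and
Shlossberg, "On Graev type ultra-metrics"). -/

namespace GraevStmt

variable {X : Type*}

section Aux

variable {Y Z : Type*}

lemma alpha_one : alpha (1 : FreeGroup Y) = 0 := by simp [alpha]

lemma alpha_mul (g h : FreeGroup Y) : alpha (g * h) = alpha g + alpha h := by
  simp [alpha]

lemma alpha_inv (g : FreeGroup Y) : alpha g⁻¹ = -alpha g := by simp [alpha]

lemma alpha_of (x : Y) : alpha (FreeGroup.of x) = 1 := by simp [alpha]

lemma alpha_map (f : Y → Z) (g : FreeGroup Y) :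
    alpha (FreeGroup.map f g) = alpha g := by
  induction g using FreeGroup.induction_on with
  | C1 => rw [map_one, alpha_one, alpha_one]
  | of x =>
    show alpha (FreeGroup.map f (FreeGroup.of x)) = alpha (FreeGroup.of x)
    rw [FreeGroup.map.of, alpha_of, alpha_of]
  | inv_of x ih =>
    show alpha (FreeGroup.map f (FreeGroup.of x)⁻¹) = alpha (FreeGroup.of x)⁻¹
    rw [map_inv, alpha_inv, alpha_inv, FreeGroup.map.of, alpha_of, alpha_of]
  | mul g h ihg ihh => rw [map_mul, alpha_mul, alpha_mul, ihg, ihh]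

lemma eq_pow_alpha [Subsingleton Y] (q : Y) (g : FreeGroup Y) :
    g = FreeGroup.of q ^ alpha g := by
  induction g using FreeGroup.induction_on with
  | C1 => rw [alpha_one, zpow_zero]
  | of x =>
    show FreeGroup.of x = FreeGroup.of q ^ alpha (FreeGroup.of x)
    rw [Subsingleton.elim x q, alpha_of, zpow_one]
  | inv_of x ih =>
    show (FreeGroup.of x)⁻¹ = FreeGroup.of q ^ alpha (FreeGroup.of x)⁻¹
    rw [Subsingleton.elim x q, alpha_inv, alpha_of, zpow_neg_one]
  | mul g h ihg ihh => rw [alpha_mul, zpow_add, ← ihg, ← ihh]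

lemma prod_mk (l : List (Y × Bool)) :
    (l.map fun p => FreeGroup.mk [p]).prod = FreeGroup.mk l := by
  induction l with
  | nil => simp [← FreeGroup.one_eq_mk]
  | cons p l ih => rw [List.map_cons, List.prod_cons, ih, FreeGroup.mul_mk]; rfl

lemma red_wordOf [DecidableEq Y] (g : FreeGroup Y) : red (wordOf g) = g := by
  unfold red wordOf
  rw [List.map_map]
  have h : (toF ∘ some : Y × Bool → FreeGroup Y) = fun p => FreeGroup.mk [p] := by
    funext p; rcases p with ⟨x, b⟩; rfl
  rw [h, prod_mk, FreeGroup.mk_toWord]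

lemma red_cons (a : Letter Y) (l : List (Letter Y)) :
    red (a :: l) = toF a * red l := by simp [red]

lemma red_append (l₁ l₂ : List (Letter Y)) :
    red (l₁ ++ l₂) = red l₁ * red l₂ := by simp [red]

lemma red_replicate (n : ℕ) : red (List.replicate n (eL : Letter Y)) = 1 := by
  have h : toF (eL : Letter Y) = 1 := rfl
  simp [red, List.map_replicate, h]

lemma foldr_max_nonneg (l : List ℝ) : 0 ≤ l.foldr max 0 := by
  induction l with
  | nil => exact le_refl 0
  | cons a l ih => exact le_trans ih (le_max_right a _)

lemma mem_le_foldr_max {l : List ℝ} {x : ℝ} (h : x ∈ l) : x ≤ l.foldr max 0 := by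
  induction l with
  | nil => simp at h
  | cons a l ih =>
    rcases List.mem_cons.mp h with rfl | h
    · exact le_max_left _ _
    · exact le_trans (ih h) (le_max_right _ _)

lemma shape {d : Y → Y → ℝ} {a b : Letter Y} (h : extOne d a b < 1) :
    (a = none ∧ b = none) ∨
      ∃ x y bo, a = some (x, bo) ∧ b = some (y, bo) ∧ extOne d a b = d x y := by
  rcases a with _ | ⟨x, _ | _⟩ <;> rcases b with _ | ⟨y, _ | _⟩ <;>
    first
      | exact Or.inl ⟨rfl, rfl⟩
      | exact absurd h (lt_irrefl 1)
      | exact Or.inr ⟨_, _, _, rfl, rfl, rfl⟩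

lemma fq_red_eq {d : Y → Y → ℝ} {r : ℝ} (hr : r ≤ 1) :
    ∀ w' v' : List (Letter Y), w'.length = v'.length →
      (∀ s ∈ List.zipWith (extOne d) w' v', s < r) →
      Fq d r (red w') = Fq d r (red v') := by
  intro w'
  induction w' with
  | nil =>
    intro v' hlen _
    rw [List.length_nil] at hlen
    rw [List.length_eq_zero_iff.mp hlen.symm]
  | cons a l ih =>
    intro v' hlen hs
    cases v' with
    | nil => simp at hlen
    | cons b m =>
      have hab : extOne d a b < r := by
        apply hs
        rw [List.zipWith_cons_cons]
        exact List.mem_cons_self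
      have hab1 : extOne d a b < 1 := lt_of_lt_of_le hab hr
      have htail : Fq d r (red l) = Fq d r (red m) := by
        refine ih m (by simpa using hlen) (fun s hsm => hs s ?_)
        rw [List.zipWith_cons_cons]
        exact List.mem_cons_of_mem _ hsm
      rw [red_cons, red_cons, map_mul, map_mul, htail]
      congr 1
      rcases shape hab1 with ⟨rfl, rfl⟩ | ⟨x, y, bo, rfl, rfl, he⟩
      · rfl
      · have hxy : d x y < r := by rw [← he]; exact hab
        have hq : Quot.mk (fun x y : Y => d x y < r) x = Quot.mk _ y :=
          Quot.sound hxy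
        show Fq d r (FreeGroup.mk [(x, bo)]) = Fq d r (FreeGroup.mk [(y, bo)])
        simp [Fq, FreeGroup.map.mk, hq]

lemma alpha_red_eq {d : Y → Y → ℝ} :
    ∀ w' v' : List (Letter Y), w'.length = v'.length →
      (∀ s ∈ List.zipWith (extOne d) w' v', s < 1) →
      alpha (red w') = alpha (red v') := by
  intro w'
  induction w' with
  | nil =>
    intro v' hlen _
    rw [List.length_nil] at hlen
    rw [List.length_eq_zero_iff.mp hlen.symm]
  | cons a l ih =>
    intro v' hlen hs
    cases v' with
    | nil => simp at hlen
    | cons b m =>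
      have hab1 : extOne d a b < 1 := by
        apply hs
        rw [List.zipWith_cons_cons]
        exact List.mem_cons_self
      have htail : alpha (red l) = alpha (red m) := by
        refine ih m (by simpa using hlen) (fun s hsm => hs s ?_)
        rw [List.zipWith_cons_cons]
        exact List.mem_cons_of_mem _ hsm
      rw [red_cons, red_cons, alpha_mul, alpha_mul, htail]
      congr 1
      rcases shape hab1 with ⟨rfl, rfl⟩ | ⟨x, y, bo, rfl, rfl, he⟩
      · rfl
      · show alpha (FreeGroup.mk [(x, bo)]) = alpha (FreeGroup.mk [(y, bo)])
        cases bo <;> simp [alpha, FreeGroup.lift_mk]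

lemma fq_eq_of_gt_one {d : Y → Y → ℝ} [Nonempty Y]
    (hdiam : ∀ x y : Y, d x y ≤ 1) {r : ℝ} (hr : 1 < r)
    {v w : FreeGroup Y} (hα : alpha v = alpha w) : Fq d r v = Fq d r w := by
  haveI hsub : Subsingleton (Quot fun x y : Y => d x y < r) := by
    constructor
    intro a b
    induction a using Quot.ind with | _ a =>
    induction b using Quot.ind with | _ b =>
    exact Quot.sound (lt_of_le_of_lt (hdiam a b) hr)
  obtain ⟨x0⟩ := ‹Nonempty Y›
  have h1 : alpha (Fq d r v) = alpha v := alpha_map _ v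
  have h2 : alpha (Fq d r w) = alpha w := alpha_map _ w
  rw [eq_pow_alpha (Quot.mk _ x0) (Fq d r v), eq_pow_alpha (Quot.mk _ x0) (Fq d r w),
    h1, h2, hα]

end Aux

/-- Lemma `geq`: for an ultra-metric space `(X, d)` of diameter at most `1`
and the extension `extOne d` of `d` to `X̄`, the associated Graev
ultra-metric satisfies `δ_u(v, w) ≥ d̂(v, w)` for all `v, w ∈ F(X)`. -/
theorem dHat_le_graev {X : Type*} [Nonempty X]
    (d : X → X → ℝ) (hd : IsUltraMetric d) (hdiam : ∀ x y : X, d x y ≤ 1) :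
    ∀ v w : FreeGroup X, dHat d v w ≤ graev (extOne d) v w := by
  classical
  intro v w
  have hSne : {r : ℝ | ∃ w' v' : List (Letter X), w'.length = v'.length ∧
      red w' = v ∧ red v' = w ∧ r = rho (extOne d) w' v'}.Nonempty := by
    refine ⟨_, wordOf v ++ List.replicate (wordOf w).length eL,
      List.replicate (wordOf v).length eL ++ wordOf w, ?_, ?_, ?_, rfl⟩
    · simp [Nat.add_comm]
    · rw [red_append, red_replicate, mul_one, red_wordOf]
    · rw [red_append, red_replicate, one_mul, red_wordOf]
  apply le_csInf hSne
  rintro s ⟨a, b, hlen, ha, hb, rfl⟩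
  set ρ := rho (extOne d) a b with hρ
  have hρ0 : 0 ≤ ρ := foldr_max_nonneg _
  have hmem : ∀ s ∈ List.zipWith (extOne d) a b, s ≤ ρ :=
    fun s hs => mem_le_foldr_max hs
  unfold dHat
  split_ifs with hα
  · refine le_of_forall_pos_le_add ?_
    intro ε hε
    have hr0 : 0 < ρ + ε := by linarith
    have hlt : ∀ s ∈ List.zipWith (extOne d) a b, s < ρ + ε :=
      fun s hs => lt_of_le_of_lt (hmem s hs) (by linarith)
    have hfq : Fq d (ρ + ε) v = Fq d (ρ + ε) w := by
      rcases le_or_gt (ρ + ε) 1 with h1 | h1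
      · rw [← ha, ← hb]; exact fq_red_eq h1 a b hlen hlt
      · exact fq_eq_of_gt_one hdiam h1 hα
    exact csInf_le ⟨0, fun t ht => le_of_lt ht.1⟩ ⟨hr0, hfq⟩
  · by_contra hcon
    push_neg at hcon
    refine hα ?_
    rw [← ha, ← hb]
    exact alpha_red_eq a b hlen
      (fun s hs => lt_of_le_of_lt (hmem s hs) hcon)

end GraevStmt
end

section
/- Let (X,d) be an ultra-metric space of diameter ≤ 1, extend d to X̄ = X ∪ X⁻¹ ∪ {e} by d(x⁻¹,y⁻¹) = d(x,y) and d(x⁻¹,y) = d(x,y⁻¹) = d(x,e) = d(x⁻¹,e) = 1 for all x,y ∈ X. Let v = x₀⋯xₙ ∈ F(X) with v ≠ e, and let s > 0 satisfy F(q_s)(v) = F(q_s)(e). Then there exists a match θ on {0,…,n} without fixed points such that ρ_u(v, v^θ) < s. -/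
/-! Graev ultra-metrics on free groups (after Gao, Savchenko–Zarichnyi and
Shlossberg, "On Graev type ultra-metrics"). -/

namespace GraevStmt

variable {X : Type*}

section Aux

variable {Y : Type*}

def up (n i : ℕ) : ℕ := if i < n then i else i + 2
def dn (n i : ℕ) : ℕ := if i < n then i else i - 2

lemma dn_up (n i : ℕ) : dn n (up n i) = i := by
  unfold up dn
  by_cases h : i < n
  · simp [h]
  · rw [if_neg h, if_neg (by omega : ¬ i + 2 < n)]
    omega

lemma up_mono (n : ℕ) : StrictMono (up n) := by
  intro i j hij
  unfold up
  by_cases hi : i < n <;> by_cases hj : j < n <;> simp [hi, hj] <;> omega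

lemma up_ne (n i : ℕ) : up n i ≠ n ∧ up n i ≠ n + 1 := by
  unfold up; by_cases h : i < n <;> simp [h] <;> omega

lemma up_dn (n k : ℕ) (h1 : k ≠ n) (h2 : k ≠ n + 1) : up n (dn n k) = k := by
  unfold up dn
  by_cases h : k < n
  · simp [h]
  · simp only [if_neg h, if_neg (by omega : ¬ k - 2 < n)]; omega

lemma dn_lt {n m k : ℕ} (hnm : n ≤ m) (hk : k < m + 2) (h1 : k ≠ n) (h2 : k ≠ n + 1) :
    dn n k < m := by
  unfold dn; by_cases h : k < n <;> simp [h] <;> omega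

def Good (L : List (Y × Bool)) (θ : ℕ → ℕ) : Prop :=
  (∀ i, i < L.length → θ i < L.length ∧ θ (θ i) = i ∧ θ i ≠ i ∧
    ∃ x b, L[i]? = some (x, b) ∧ L[θ i]? = some (x, !b)) ∧
  ∀ i j, j < L.length → i < j → j < θ i → θ i < θ j → False

lemma getElem?_insert (A B : List (Y × Bool)) (p q : Y × Bool) {i : ℕ}
    (h : i < (A ++ B).length) :
    (A ++ p :: q :: B)[up A.length i]? = (A ++ B)[i]? := by
  rw [List.length_append] at h
  unfold up
  by_cases hi : i < A.length
  · rw [if_pos hi, List.getElem?_append_left hi, List.getElem?_append_left hi]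
  · rw [if_neg hi, List.getElem?_append_right (by omega : A.length ≤ i + 2),
      List.getElem?_append_right (by omega : A.length ≤ i)]
    have : i + 2 - A.length = (i - A.length) + 2 := by omega
    rw [this]
    simp

lemma getElem?_insert_fst (A B : List (Y × Bool)) (p q : Y × Bool) :
    (A ++ p :: q :: B)[A.length]? = some p := by
  rw [List.getElem?_append_right le_rfl]; simp

lemma getElem?_insert_snd (A B : List (Y × Bool)) (p q : Y × Bool) :
    (A ++ p :: q :: B)[A.length + 1]? = some q := by
  rw [List.getElem?_append_right (by omega)]
  have : A.length + 1 - A.length = 1 := by omega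
  rw [this]; simp

lemma good_insert (A B : List (Y × Bool)) (x : Y) (b : Bool) (θ' : ℕ → ℕ)
    (h : Good (A ++ B) θ') :
    Good (A ++ (x, b) :: (x, !b) :: B)
      (fun i => if i = A.length then A.length + 1 else
        if i = A.length + 1 then A.length else up A.length (θ' (dn A.length i))) := by
  set n := A.length with hn
  set m := (A ++ B).length with hm
  have hnm : n ≤ m := by rw [hm, List.length_append]; omega
  have hlen : (A ++ (x, b) :: (x, !b) :: B).length = m + 2 := by
    rw [hm]; simp; omega
  set θ : ℕ → ℕ := (fun i => if i = n then n + 1 else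
        if i = n + 1 then n else up n (θ' (dn n i))) with hθ
  have hθn : θ n = n + 1 := by simp [hθ]
  have hθn1 : θ (n + 1) = n := by simp [hθ]
  have hθo : ∀ i, i ≠ n → i ≠ n + 1 → θ i = up n (θ' (dn n i)) := by
    intro i h1 h2; simp [hθ, h1, h2]
  constructor
  · intro i hi
    rw [hlen] at hi
    by_cases h1 : i = n
    · subst h1
      refine ⟨by rw [hθn]; omega, by rw [hθn, hθn1], by omega, x, b, ?_, ?_⟩
      · rw [getElem?_insert_fst]
      · rw [hθn, getElem?_insert_snd]
    by_cases h2 : i = n + 1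
    · subst h2
      refine ⟨by rw [hθn1]; omega, by rw [hθn1, hθn], by omega, x, !b, ?_, ?_⟩
      · rw [getElem?_insert_snd]
      · rw [hθn1, getElem?_insert_fst, Bool.not_not]
    · have hdi : dn n i < m := dn_lt hnm hi h1 h2
      obtain ⟨hb, hinv, hne, y, c, hg1, hg2⟩ := h.1 (dn n i) hdi
      have hup1 := up_ne n (θ' (dn n i))
      have hθi : θ i = up n (θ' (dn n i)) := hθo i h1 h2
      refine ⟨?_, ?_, ?_, y, c, ?_, ?_⟩
      · rw [hθi]
        have : up n (θ' (dn n i)) ≤ θ' (dn n i) + 2 := by unfold up; split <;> omega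
        omega
      · rw [hθi, hθo _ hup1.1 hup1.2, dn_up, hinv, up_dn n i h1 h2]
      · rw [hθi]
        intro hcon
        have h3 := dn_up n (θ' (dn n i))
        rw [hcon] at h3
        exact hne h3.symm
      · rw [← up_dn n i h1 h2, getElem?_insert _ _ _ _ hdi]; exact hg1
      · rw [hθi, getElem?_insert _ _ _ _ hb]; exact hg2
  · intro i j hj hij h1 h2
    rw [hlen] at hj
    have hi : i < m + 2 := by omega
    by_cases hin : i = n
    · subst hin; rw [hθn] at h1; omega
    by_cases hin1 : i = n + 1
    · subst hin1; rw [hθn1] at h1; omega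
    by_cases hjn : j = n
    · subst hjn
      rw [hθn] at h2
      rw [hθo i hin hin1] at h1 h2
      have := up_ne n (θ' (dn n i))
      omega
    by_cases hjn1 : j = n + 1
    · subst hjn1
      rw [hθn1] at h2
      rw [hθo i hin hin1] at h1 h2
      omega
    · rw [hθo i hin hin1] at h1 h2
      rw [hθo j hjn hjn1] at h2
      have hdi : dn n i < m := dn_lt hnm hi hin hin1
      have hdj : dn n j < m := dn_lt hnm hj hjn hjn1
      apply h.2 (dn n i) (dn n j) hdj
      · rw [← (up_mono n).lt_iff_lt, up_dn n i hin hin1, up_dn n j hjn hjn1]; exact hij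
      · rw [← (up_mono n).lt_iff_lt, up_dn n j hjn hjn1]; exact h1
      · exact (up_mono n).lt_iff_lt.mp h2

lemma exists_good (L : List (Y × Bool)) (h : FreeGroup.Red L []) : ∃ θ, Good L θ := by
  induction h using Relation.ReflTransGen.head_induction_on with
  | refl => exact ⟨id, by intro i hi; simp at hi, by intro i j hj; simp at hj⟩
  | head hstep _ ih =>
    obtain ⟨θ', hθ'⟩ := ih
    cases hstep with
    | @not A B z c => exact ⟨_, good_insert A B z c θ' hθ'⟩


lemma foldr_max_lt {l : List ℝ} {s : ℝ} (hs : 0 < s) (h : ∀ x ∈ l, x < s) :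
    l.foldr max 0 < s := by
  induction l with
  | nil => simpa using hs
  | cons a t ih =>
    simp only [List.foldr_cons]
    exact max_lt (h a (by simp)) (ih fun x hx => h x (List.mem_cons_of_mem _ hx))

end Aux

/-- From the proof of Lemma `leq`: if `v = x₀⋯xₙ ∈ F(X)`, `v ≠ e`, `s > 0`
and `F(q_s)(v) = F(q_s)(e)`, then there is a fixed-point-free match `θ` with
`ρ_u(v, v^θ) < s` (distances computed in the extension `extOne d`). -/
theorem exists_fixedPointFree_match {X : Type*} [Nonempty X] [DecidableEq X]
    (d : X → X → ℝ) (hd : IsUltraMetric d) (hdiam : ∀ x y : X, d x y ≤ 1)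
    (v : FreeGroup X) (hv : v ≠ 1) (s : ℝ) (hs : 0 < s)
    (hq : Fq d s v = 1) :
    ∃ θ : Fin (wordOf v).length → Fin (wordOf v).length, IsMatch θ ∧
      (∀ i, θ i ≠ i) ∧
      rho (extOne d) (wordOf v) (matchWord (wordOf v) θ) < s := by
  classical
  obtain ⟨hsymm, hzero, htri⟩ := hd
  have hequiv : Equivalence (fun x y : X => d x y < s) :=
    ⟨fun a => by rw [(hzero a a).2 rfl]; exact hs,
     fun {a b} h => by rwa [hsymm],
     fun {a b c} h1 h2 => lt_of_le_of_lt (htri a _ _) (max_lt h1 h2)⟩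
  set r : X → X → Prop := fun x y : X => d x y < s with hrdef
  set L : List (X × Bool) := v.toWord with hLdef
  set L' : List (Quot r × Bool) := L.map fun p => (Quot.mk r p.1, p.2) with hL'def
  have hmap : Fq d s v = FreeGroup.mk L' := by
    show FreeGroup.map (Quot.mk r) v = _
    conv_lhs => rw [← FreeGroup.mk_toWord (x := v)]
    exact FreeGroup.map.mk
  have hred : FreeGroup.Red L' [] := by
    have h1 : FreeGroup.reduce L' = [] := by
      rw [← FreeGroup.toWord_mk, ← hmap, hq, FreeGroup.toWord_one]
    rw [← h1]; exact FreeGroup.reduce.red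
  obtain ⟨θ, hg⟩ := exists_good L' hred
  have hlen' : L'.length = L.length := List.length_map _
  have hW : (wordOf v).length = L.length := by
    simp only [wordOf, List.length_map, hLdef]
  have hgetW : ∀ (k : ℕ) (hk : k < L.length), (wordOf v)[k]'(by omega) = some (L[k]) := by
    intro k hk
    simp only [wordOf, List.getElem_map, hLdef]
  have hgetL' : ∀ (k : ℕ) (hk : k < L.length),
      L'[k]? = some (Quot.mk r (L[k]).1, (L[k]).2) := by
    intro k hk
    simp only [hL'def, List.getElem?_map, List.getElem?_eq_getElem hk, Option.map_some]
  have hbd : ∀ i : Fin (wordOf v).length, θ i.val < (wordOf v).length := by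
    intro i
    have hi : i.val < L'.length := by rw [hlen', ← hW]; exact i.isLt
    have h2 := (hg.1 i.val hi).1
    rw [hlen', ← hW] at h2
    exact h2
  refine ⟨fun i => ⟨θ i.val, hbd i⟩, ⟨?_, ?_⟩, ?_, ?_⟩
  · intro i
    have hi : i.val < L'.length := by rw [hlen', ← hW]; exact i.isLt
    exact Fin.ext ((hg.1 i.val hi).2.1)
  · rintro i j ⟨h1, h2, h3⟩
    rw [Fin.lt_def] at h1 h2 h3
    exact hg.2 i.val j.val (by rw [hlen', ← hW]; exact j.isLt) h1 h2 h3
  · intro i hcon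
    have hi : i.val < L'.length := by rw [hlen', ← hW]; exact i.isLt
    exact (hg.1 i.val hi).2.2.1 (congrArg Fin.val hcon)
  · apply foldr_max_lt hs
    intro z hz
    rw [List.mem_iff_getElem] at hz
    obtain ⟨k, hk, hzk⟩ := hz
    rw [List.getElem_zipWith] at hzk
    subst hzk
    have hkW : k < (wordOf v).length :=
      lt_of_lt_of_le hk (by rw [List.length_zipWith]; exact min_le_left _ _)
    have hkL : k < L.length := by omega
    have hkL' : k < L'.length := by omega
    obtain ⟨hb, hinv, hne, y, c, hg1, hg2⟩ := hg.1 k hkL'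
    have hbL : θ k < L.length := by omega
    rw [hgetL' k hkL] at hg1
    rw [hgetL' (θ k) hbL] at hg2
    rcases hp : L[k] with ⟨x, b⟩
    rcases hp2 : L[θ k] with ⟨x2, b2⟩
    rw [hp] at hg1
    rw [hp2] at hg2
    obtain ⟨hy1, hc1⟩ := Prod.mk.injEq .. ▸ Option.some.inj hg1
    obtain ⟨hy2, hc2⟩ := Prod.mk.injEq .. ▸ Option.some.inj hg2
    dsimp only at hy1 hc1 hy2 hc2
    unfold matchWord
    rw [List.getElem_ofFn]
    simp only [List.get_eq_getElem]
    rcases lt_trichotomy k (θ k) with hlt | heq | hgt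
    · rw [if_pos (show (⟨k, hkW⟩ : Fin _) < ⟨θ k, hbd ⟨k, hkW⟩⟩ from Fin.mk_lt_mk.mpr hlt)]
      rw [hgetW k hkL, hp]
      have he : extOne d (some (x, b)) (some (x, b)) = d x x := by cases b <;> rfl
      rw [he, (hzero x x).2 rfl]
      exact hs
    · exact absurd heq.symm hne
    · rw [if_neg (show ¬ (⟨k, hkW⟩ : Fin _) < ⟨θ k, hbd ⟨k, hkW⟩⟩ by
        rw [Fin.mk_lt_mk]; omega)]
      rw [if_neg (show ¬ (⟨θ k, hbd ⟨k, hkW⟩⟩ : Fin _) = ⟨k, hkW⟩ by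
        intro hcon; exact hne (by simpa using congrArg Fin.val hcon))]
      rw [hgetW k hkL, hp, hgetW (θ k) hbL, hp2]
      have hb2 : b2 = !b := by rw [hc2, ← hc1]
      subst hb2
      have hl : linv (some (x2, !b)) = some (x2, b) := by cases b <;> rfl
      rw [hl]
      have he : extOne d (some (x, b)) (some (x2, b)) = d x x2 := by cases b <;> rfl
      rw [he]
      have hxq : Quot.mk r x2 = Quot.mk r x := by rw [hy2, hy1]
      have hdx : r x2 x := hequiv.eqvGen_iff.mp (Quot.eqvGen_exact hxq)
      have hdx2 : d x2 x < s := hdx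
      rw [hsymm]
      exact hdx2

end GraevStmt
end
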